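/- arXiv:2504.16424 — 8 statements merged into one kernel-verified Lean document; each statement's English description precedes it below -/
import Mathlib

section
/- Let N be a positive integer and let H be the N×N complex tridiagonal matrix with diagonal entries a_1,…,a_N, superdiagonal entries b_1,…,b_{N-1} and subdiagonal entries c_2,…,c_N. Fix E ∈ ℂ and suppose f_1,…,f_{N+1} ∈ ℂ satisfy f_{N+1} = 0 and, for every k = 1,…,N, f_k · (a_k − E − b_k f_{k+1} c_{k+1}) = 1 (where b_N and c_{N+1} may be taken as 0). Then H − E·I = U · F · L, where F is the diagonal matrix with diagonal entries 1/f_1,…,1/f_N, U is the upper bidiagonal matrix with 1's on the diagonal and superdiagonal entries b_k f_{k+1} (k = 1,…,N−1), and L is the lower bidiagonal matrix with 1's on the diagonal and subdiagonal entries f_k c_k (k = 2,…,N). -/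
/-!
Since `U` is unit upper bidiagonal and `L` unit lower bidiagonal, each entry of `U * D * L` is a sum
of at most two terms, so the product is tridiagonal. With `D = diag (1 / f k)` its off-diagonal
entries are `b k f (k+1) / f (k+1) = b k` and `f k c k / f k = c k` (the recurrence forces
`f k ≠ 0`), and its diagonal entry `1 / f k + b k f (k+1) c (k+1)` is `a k - E` by the recurrence
itself; at `k = N` the correction term is absent, as is `b N f (N+1) c (N+1)` since `f (N+1) = 0`.
-/

open Matrix

section Bidiagonal

variable {R : Type*} [Semiring R] {N : ℕ}

theorem Fin.sum_ite_val_eq (p : ℕ) (g : Fin N → R) :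
    ∑ k : Fin N, (if (k : ℕ) = p then g k else 0) = if h : p < N then g ⟨p, h⟩ else 0 := by
  split_ifs with h
  · simpa [Fin.ext_iff] using Finset.sum_ite_eq' Finset.univ (⟨p, h⟩ : Fin N) g
  · exact Finset.sum_eq_zero fun k _ => if_neg (by omega)

theorem upperBidiagonal_mul_apply {U : Matrix (Fin N) (Fin N) R} {u : ℕ → R}
    (hU : ∀ i j : Fin N, U i j =
      if (i : ℕ) = (j : ℕ) then 1 else if (i : ℕ) + 1 = (j : ℕ) then u ((i : ℕ) + 1) else 0)
    (M : Matrix (Fin N) (Fin N) R) (i j : Fin N) :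
    (U * M) i j = M i j + if h : (i : ℕ) + 1 < N then u ((i : ℕ) + 1) * M ⟨i + 1, h⟩ j else 0 := by
  have hsummand : ∀ k, U i k * M k j =
      (if i = k then M k j else 0) + if (k : ℕ) = i + 1 then u (i + 1) * M k j else 0 := by
    intro k
    rw [hU]
    by_cases hik : i = k
    · subst hik; simp
    · have hik' : (i : ℕ) ≠ k := fun h => hik (Fin.ext h)
      by_cases hk : (k : ℕ) = i + 1
      · simp [hik, hk]
      · simp [hik, hik', hk, Ne.symm hk]
  rw [mul_apply, Finset.sum_congr rfl fun k _ => hsummand k, Finset.sum_add_distrib,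
    Finset.sum_ite_eq, if_pos (Finset.mem_univ _), Fin.sum_ite_val_eq]

theorem upperBidiagonal_mul_diagonal_mul_lowerBidiagonal_apply
    {U L : Matrix (Fin N) (Fin N) R} {u l : ℕ → R}
    (hU : ∀ i j : Fin N, U i j =
      if (i : ℕ) = (j : ℕ) then 1 else if (i : ℕ) + 1 = (j : ℕ) then u ((i : ℕ) + 1) else 0)
    (hL : ∀ i j : Fin N, L i j =
      if (i : ℕ) = (j : ℕ) then 1 else if (j : ℕ) + 1 = (i : ℕ) then l ((i : ℕ) + 1) else 0)
    (d : ℕ → R) (i j : Fin N) :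
    (U * diagonal (fun k : Fin N => d ((k : ℕ) + 1)) * L) i j =
      if (i : ℕ) = (j : ℕ) then
        d (i + 1) + (if (i : ℕ) + 1 < N then u (i + 1) * d (i + 2) * l (i + 2) else 0)
      else if (i : ℕ) + 1 = (j : ℕ) then u (i + 1) * d (i + 2)
      else if (j : ℕ) + 1 = (i : ℕ) then d (i + 1) * l (i + 1) else 0 := by
  rw [Matrix.mul_assoc, upperBidiagonal_mul_apply hU]
  split_ifs <;> simp only [diagonal_mul, hL] <;> split_ifs <;> first | omega | simp [mul_assoc]

end Bidiagonal

theorem stmt0_general (N : ℕ) (a b c : ℕ → ℂ) (E : ℂ) (f : ℕ → ℂ)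
    (hfN : f (N + 1) = 0)
    (hrec : ∀ k, 1 ≤ k → k ≤ N → f k * (a k - E - b k * f (k + 1) * c (k + 1)) = 1)
    (H U F L : Matrix (Fin N) (Fin N) ℂ)
    (hH : ∀ i j : Fin N, H i j =
      if (i : ℕ) = (j : ℕ) then a ((i : ℕ) + 1)
      else if (i : ℕ) + 1 = (j : ℕ) then b ((i : ℕ) + 1)
      else if (j : ℕ) + 1 = (i : ℕ) then c ((i : ℕ) + 1) else 0)
    (hU : ∀ i j : Fin N, U i j =
      if (i : ℕ) = (j : ℕ) then 1
      else if (i : ℕ) + 1 = (j : ℕ) then b ((i : ℕ) + 1) * f ((i : ℕ) + 2) else 0)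
    (hF : ∀ i j : Fin N, F i j =
      if (i : ℕ) = (j : ℕ) then 1 / f ((i : ℕ) + 1) else 0)
    (hL : ∀ i j : Fin N, L i j =
      if (i : ℕ) = (j : ℕ) then 1
      else if (j : ℕ) + 1 = (i : ℕ) then f ((i : ℕ) + 1) * c ((i : ℕ) + 1) else 0) :
    H - E • (1 : Matrix (Fin N) (Fin N) ℂ) = U * F * L := by
  have hF_diag : F = diagonal fun k : Fin N => 1 / f ((k : ℕ) + 1) := by
    ext i j
    simp only [hF, diagonal_apply, Fin.ext_iff]
  have hf : ∀ k, 1 ≤ k → k ≤ N → f k ≠ 0 := fun k h₁ h₂ =>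
    left_ne_zero_of_mul_eq_one (hrec k h₁ h₂)
  have hinv : ∀ k, 1 ≤ k → k ≤ N → 1 / f k = a k - E - b k * f (k + 1) * c (k + 1) :=
    fun k h₁ h₂ => (eq_one_div_of_mul_eq_one_right (hrec k h₁ h₂)).symm
  ext i j
  rw [hF_diag, upperBidiagonal_mul_diagonal_mul_lowerBidiagonal_apply
    (u := fun k => b k * f (k + 1)) (d := fun k => 1 / f k) (l := fun k => f k * c k) hU hL]
  simp only [Matrix.sub_apply, Matrix.smul_apply, one_apply, Fin.ext_iff, hH, smul_eq_mul]
  have hi := i.isLt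
  split_ifs with hdiag hlast hsup hsub
  · have hf₂ := hf (i + 2) (by omega) (by omega)
    rw [hinv (i + 1) (by omega) (by omega)]
    field_simp
    ring
  · rw [hinv (i + 1) (by omega) hi, show (i : ℕ) + 1 + 1 = N + 1 by omega, hfN]
    ring
  · simp [hf (i + 2) (by omega) (by omega)]
  · simp [hf (i + 1) (by omega) hi]
  · ring

/-- Continued-fraction factorization `H - E·I = U · F · L` of a complex
tridiagonal matrix. Indices are 1-based: the diagonal of `H` is `a 1, …, a N`,
the superdiagonal is `b 1, …, b (N-1)`, the subdiagonal is `c 2, …, c N`;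
`b N = 0` and `c (N+1) = 0` by convention. -/
theorem stmt0 (N : ℕ) (hN : 0 < N) (a b c : ℕ → ℂ) (E : ℂ) (f : ℕ → ℂ)
    (hbN : b N = 0) (hcN : c (N + 1) = 0)
    (hfN : f (N + 1) = 0)
    (hrec : ∀ k, 1 ≤ k → k ≤ N → f k * (a k - E - b k * f (k + 1) * c (k + 1)) = 1)
    (H U F L : Matrix (Fin N) (Fin N) ℂ)
    (hH : ∀ i j : Fin N, H i j =
      if (i : ℕ) = (j : ℕ) then a ((i : ℕ) + 1)
      else if (i : ℕ) + 1 = (j : ℕ) then b ((i : ℕ) + 1)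
      else if (j : ℕ) + 1 = (i : ℕ) then c ((i : ℕ) + 1) else 0)
    (hU : ∀ i j : Fin N, U i j =
      if (i : ℕ) = (j : ℕ) then 1
      else if (i : ℕ) + 1 = (j : ℕ) then b ((i : ℕ) + 1) * f ((i : ℕ) + 2) else 0)
    (hF : ∀ i j : Fin N, F i j =
      if (i : ℕ) = (j : ℕ) then 1 / f ((i : ℕ) + 1) else 0)
    (hL : ∀ i j : Fin N, L i j =
      if (i : ℕ) = (j : ℕ) then 1
      else if (j : ℕ) + 1 = (i : ℕ) then f ((i : ℕ) + 1) * c ((i : ℕ) + 1) else 0) :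
    H - E • (1 : Matrix (Fin N) (Fin N) ℂ) = U * F * L :=
  stmt0_general N a b c E f hfN hrec H U F L hH hU hF hL
end

section
/- Let N be a positive integer and let H be the N×N complex tridiagonal matrix with diagonal entries a_k, superdiagonal entries b_k and subdiagonal entries c_{k+1}. Fix E ∈ ℂ and suppose f_1,…,f_{N+1} ∈ ℂ satisfy f_{N+1} = 0 and f_k · (a_k − E − b_k f_{k+1} c_{k+1}) = 1 for every k = 1,…,N. Then H − E·I is invertible and (H − E·I)^{−1} = L^{−1} · F^{−1} · U^{−1}, where F is diagonal with entries 1/f_k, U is unit upper bidiagonal with superdiagonal entries b_k f_{k+1}, and L is unit lower bidiagonal with subdiagonal entries f_k c_k. -/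
/-!
The recurrence says exactly that `H - E = U * (F * L)`. Here `F * L` is lower bidiagonal with
diagonal `1 / f k` and subdiagonal `c k`, and left multiplication by `U` adds `b k * f (k + 1)`
times the next row: this restores `b k` above the diagonal and turns the diagonal into
`1 / f k + b k * f (k + 1) * c (k + 1) = a k - E` (at `k = N` the extra term vanishes because
`f (N + 1) = 0`). The three factors are triangular with invertible diagonals.
-/

open Matrix

namespace Matrix

theorem mul_apply_of_bidiagonal_row {R : Type*} [NonUnitalNonAssocSemiring R]
    {N : ℕ} (A B : Matrix (Fin N) (Fin N) R) (i j : Fin N)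
    (hA : ∀ m : Fin N, (m : ℕ) ≠ i → (m : ℕ) ≠ i + 1 → A i m = 0) :
    (A * B) i j = A i i * B i j +
      if h : (i : ℕ) + 1 < N then A i ⟨i + 1, h⟩ * B ⟨i + 1, h⟩ j else 0 := by
  rw [mul_apply]
  split_ifs with h
  · refine Fintype.sum_eq_add i ⟨i + 1, h⟩ (by simp [Fin.ext_iff]) fun m ⟨hi, hi'⟩ => ?_
    rw [hA m (Fin.val_ne_of_ne hi) (fun e => hi' (Fin.ext e)), zero_mul]
  · rw [add_zero]
    exact Fintype.sum_eq_single i fun m hm => by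
      rw [hA m (Fin.val_ne_of_ne hm) (by omega), zero_mul]

section Triangular

variable {R : Type*} {n : Type*} [CommRing R] [Fintype n] [DecidableEq n] [LinearOrder n]

theorem IsUpperTriangular.isUnit {M : Matrix n n R} (h : M.IsUpperTriangular)
    (hd : ∀ i, IsUnit (M i i)) : IsUnit M := by
  rw [isUnit_iff_isUnit_det, det_of_isUpperTriangular h]
  exact IsUnit.prod_univ_iff.mpr hd

theorem IsLowerTriangular.isUnit {M : Matrix n n R} (h : M.IsLowerTriangular)
    (hd : ∀ i, IsUnit (M i i)) : IsUnit M := by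
  rw [isUnit_iff_isUnit_det, det_of_isLowerTriangular M h]
  exact IsUnit.prod_univ_iff.mpr hd

end Triangular

end Matrix

section Factorization

variable {N : ℕ} {a b c f : ℕ → ℂ} {E : ℂ} {H U F L : Matrix (Fin N) (Fin N) ℂ}

theorem diagonal_mul_lowerBidiagonal
    (hf : ∀ k, 1 ≤ k → k ≤ N → f k ≠ 0)
    (hF : ∀ i j : Fin N, F i j = if (i : ℕ) = (j : ℕ) then 1 / f ((i : ℕ) + 1) else 0)
    (hL : ∀ i j : Fin N, L i j =
      if (i : ℕ) = (j : ℕ) then 1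
      else if (j : ℕ) + 1 = (i : ℕ) then f ((i : ℕ) + 1) * c ((i : ℕ) + 1) else 0)
    (i j : Fin N) :
    (F * L) i j = if (i : ℕ) = (j : ℕ) then 1 / f ((i : ℕ) + 1)
      else if (j : ℕ) + 1 = (i : ℕ) then c ((i : ℕ) + 1) else 0 := by
  have hFdiag : F = diagonal fun i : Fin N => 1 / f ((i : ℕ) + 1) := by
    ext i j
    simp [hF, diagonal_apply, Fin.ext_iff]
  have := hf (i + 1) (by omega) (by omega)
  rw [hFdiag, diagonal_mul, hL]
  split_ifs <;> simp [this]

theorem tridiagonal_sub_smul_one_eq_mul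
    (hfN : f (N + 1) = 0)
    (hrec : ∀ k, 1 ≤ k → k ≤ N → f k * (a k - E - b k * f (k + 1) * c (k + 1)) = 1)
    (hH : ∀ i j : Fin N, H i j =
      if (i : ℕ) = (j : ℕ) then a ((i : ℕ) + 1)
      else if (i : ℕ) + 1 = (j : ℕ) then b ((i : ℕ) + 1)
      else if (j : ℕ) + 1 = (i : ℕ) then c ((i : ℕ) + 1) else 0)
    (hU : ∀ i j : Fin N, U i j =
      if (i : ℕ) = (j : ℕ) then 1
      else if (i : ℕ) + 1 = (j : ℕ) then b ((i : ℕ) + 1) * f ((i : ℕ) + 2) else 0)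
    {M : Matrix (Fin N) (Fin N) ℂ}
    (hM : ∀ i j : Fin N, M i j = if (i : ℕ) = (j : ℕ) then 1 / f ((i : ℕ) + 1)
      else if (j : ℕ) + 1 = (i : ℕ) then c ((i : ℕ) + 1) else 0) :
    H - E • (1 : Matrix (Fin N) (Fin N) ℂ) = U * M := by
  ext i j
  have hU_row : ∀ m : Fin N, (m : ℕ) ≠ i → (m : ℕ) ≠ i + 1 → U i m = 0 :=
    fun m h1 h2 => by rw [hU, if_neg h1.symm, if_neg (Ne.symm h2)]
  rw [mul_apply_of_bidiagonal_row U M i j hU_row]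
  have hf : ∀ k, 1 ≤ k → k ≤ N → f k ≠ 0 := fun k h1 h2 =>
    left_ne_zero_of_mul_eq_one (hrec k h1 h2)
  have hdiag : a (i + 1) - E = 1 / f (i + 1) + b (i + 1) * f (i + 2) * c (i + 1 + 1) := by
    have hi := hrec (i + 1) (by omega) (by omega)
    field_simp [hf (i + 1) (by omega) (by omega)]
    linear_combination hi
  simp only [Matrix.sub_apply, Matrix.smul_apply, one_apply, smul_eq_mul, hH, hU, hM, Fin.ext_iff]
  split_ifs <;> try omega
  -- left: diagonal of an inner row, diagonal of the last row, superdiagonal; the rest is `ring`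
  · linear_combination hdiag
  · rw [show (i : ℕ) + 2 = N + 1 by omega, hfN] at hdiag
    linear_combination hdiag
  · field_simp [hf (i + 2) (by omega) (by omega)]
    ring
  all_goals ring

end Factorization

theorem stmt3_general (N : ℕ) (a b c : ℕ → ℂ) (E : ℂ) (f : ℕ → ℂ)
    (hfN : f (N + 1) = 0)
    (hrec : ∀ k, 1 ≤ k → k ≤ N → f k * (a k - E - b k * f (k + 1) * c (k + 1)) = 1)
    (H U F L : Matrix (Fin N) (Fin N) ℂ)
    (hH : ∀ i j : Fin N, H i j =
      if (i : ℕ) = (j : ℕ) then a ((i : ℕ) + 1)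
      else if (i : ℕ) + 1 = (j : ℕ) then b ((i : ℕ) + 1)
      else if (j : ℕ) + 1 = (i : ℕ) then c ((i : ℕ) + 1) else 0)
    (hU : ∀ i j : Fin N, U i j =
      if (i : ℕ) = (j : ℕ) then 1
      else if (i : ℕ) + 1 = (j : ℕ) then b ((i : ℕ) + 1) * f ((i : ℕ) + 2) else 0)
    (hF : ∀ i j : Fin N, F i j =
      if (i : ℕ) = (j : ℕ) then 1 / f ((i : ℕ) + 1) else 0)
    (hL : ∀ i j : Fin N, L i j =
      if (i : ℕ) = (j : ℕ) then 1
      else if (j : ℕ) + 1 = (i : ℕ) then f ((i : ℕ) + 1) * c ((i : ℕ) + 1) else 0) :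
    IsUnit (H - E • (1 : Matrix (Fin N) (Fin N) ℂ)) ∧
      (H - E • (1 : Matrix (Fin N) (Fin N) ℂ))⁻¹ = L⁻¹ * F⁻¹ * U⁻¹ := by
  have hf : ∀ k, 1 ≤ k → k ≤ N → f k ≠ 0 := fun k h1 h2 =>
    left_ne_zero_of_mul_eq_one (hrec k h1 h2)
  have hfactor : H - E • (1 : Matrix (Fin N) (Fin N) ℂ) = U * F * L := by
    rw [mul_assoc]
    exact tridiagonal_sub_smul_one_eq_mul hfN hrec hH hU
      (diagonal_mul_lowerBidiagonal hf hF hL)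
  have hU_unit : IsUnit U := IsUpperTriangular.isUnit
    (fun i j (hji : (j : ℕ) < i) => by rw [hU, if_neg (by omega), if_neg (by omega)])
    (fun i => by simp [hU])
  have hF_unit : IsUnit F := IsUpperTriangular.isUnit
    (fun i j (hji : (j : ℕ) < i) => by rw [hF, if_neg (by omega)])
    (fun i => by simp [hF, hf])
  have hL_unit : IsUnit L := IsLowerTriangular.isUnit
    (fun i j (hij : (i : ℕ) < j) => by rw [hL, if_neg (by omega), if_neg (by omega)])
    (fun i => by simp [hL])
  refine ⟨hfactor ▸ (hU_unit.mul hF_unit).mul hL_unit, ?_⟩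
  rw [hfactor, Matrix.mul_inv_rev, Matrix.mul_inv_rev, mul_assoc]

/-- Continued-fraction factorization of the resolvent:
`(H - E·I)⁻¹ = L⁻¹ · F⁻¹ · U⁻¹` for a complex tridiagonal matrix `H`
(1-based indexing of the entry data). -/
theorem stmt3 (N : ℕ) (hN : 0 < N) (a b c : ℕ → ℂ) (E : ℂ) (f : ℕ → ℂ)
    (hbN : b N = 0) (hcN : c (N + 1) = 0)
    (hfN : f (N + 1) = 0)
    (hrec : ∀ k, 1 ≤ k → k ≤ N → f k * (a k - E - b k * f (k + 1) * c (k + 1)) = 1)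
    (H U F L : Matrix (Fin N) (Fin N) ℂ)
    (hH : ∀ i j : Fin N, H i j =
      if (i : ℕ) = (j : ℕ) then a ((i : ℕ) + 1)
      else if (i : ℕ) + 1 = (j : ℕ) then b ((i : ℕ) + 1)
      else if (j : ℕ) + 1 = (i : ℕ) then c ((i : ℕ) + 1) else 0)
    (hU : ∀ i j : Fin N, U i j =
      if (i : ℕ) = (j : ℕ) then 1
      else if (i : ℕ) + 1 = (j : ℕ) then b ((i : ℕ) + 1) * f ((i : ℕ) + 2) else 0)
    (hF : ∀ i j : Fin N, F i j =
      if (i : ℕ) = (j : ℕ) then 1 / f ((i : ℕ) + 1) else 0)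
    (hL : ∀ i j : Fin N, L i j =
      if (i : ℕ) = (j : ℕ) then 1
      else if (j : ℕ) + 1 = (i : ℕ) then f ((i : ℕ) + 1) * c ((i : ℕ) + 1) else 0) :
    IsUnit (H - E • (1 : Matrix (Fin N) (Fin N) ℂ)) ∧
      (H - E • (1 : Matrix (Fin N) (Fin N) ℂ))⁻¹ = L⁻¹ * F⁻¹ * U⁻¹ :=
  stmt3_general N a b c E f hfN hrec H U F L hH hU hF hL
end

section
/- Let N be a positive integer and let H be the N×N complex tridiagonal matrix with diagonal entries a_k, superdiagonal entries b_k and subdiagonal entries c_{k+1}. Fix E ∈ ℂ and suppose f_1,…,f_{N+1} ∈ ℂ satisfy f_{N+1} = 0 and f_k · (a_k − E − b_k f_{k+1} c_{k+1}) = 1 for every k = 1,…,N. Then H − E·I is invertible and the (1,1) entry of its inverse equals f_1, i.e., [(H − E·I)^{−1}]_{11} = f_1 (the Green's-function identity). -/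
/-!
The backward recurrence is Gaussian elimination started at the bottom row: it factors
`H - E = U D L` with `U` unit upper bidiagonal, `D = diag (1 / f k)` and `L` unit lower
bidiagonal with subdiagonal `f k * c k` (`lowerApply c f`). Acting on sequences this is the
identity `f k * (T X) k = (L X) k + f k * b k * (L X) (k + 1)` for the tridiagonal operator `T`.
A kernel vector therefore has `L X = 0`, by back substitution from `(L X) (N + 1) = 0` (which
holds because `f (N + 1) = 0`), and hence `X = 0`. The solution `greenColumn c f` of
`L X = f 1 • e₁` solves `(H - E) X = e₁`, and its first entry is `f 1`.
-/

open Matrix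

variable {R K : Type*} [CommRing R] [Field K]

/-- Indices are 1-based as in the entry data: row `i : Fin N` is row `i + 1` of the paper. -/
def tridiagonal (N : ℕ) (a b c : ℕ → R) : Matrix (Fin N) (Fin N) R :=
  Matrix.of fun i j =>
    if (i : ℕ) = (j : ℕ) then a ((i : ℕ) + 1)
    else if (i : ℕ) + 1 = (j : ℕ) then b ((i : ℕ) + 1)
    else if (j : ℕ) + 1 = (i : ℕ) then c ((i : ℕ) + 1) else 0

def tridiagonalApply (a b c X : ℕ → R) (k : ℕ) : R :=
  c k * X (k - 1) + a k * X k + b k * X (k + 1)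

def lowerApply (c f X : ℕ → R) (k : ℕ) : R :=
  X k + f k * c k * X (k - 1)

def extendByZero {N : ℕ} (x : Fin N → R) : ℕ → R
  | 0 => 0
  | m + 1 => if h : m < N then x ⟨m, h⟩ else 0

def greenColumn (c f : ℕ → R) : ℕ → R
  | 0 => 0
  | 1 => f 1
  | k + 2 => -(f (k + 2) * c (k + 2)) * greenColumn c f (k + 1)

theorem tridiagonal_sub_smul_one (N : ℕ) (a b c : ℕ → R) (E : R) :
    tridiagonal N a b c - E • (1 : Matrix (Fin N) (Fin N) R) =
      tridiagonal N (fun k => a k - E) b c := by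
  ext i j
  simp only [tridiagonal, Matrix.sub_apply, Matrix.smul_apply, one_apply, of_apply, Fin.ext_iff,
    smul_eq_mul]
  split_ifs <;> first | omega | ring

theorem sum_ite_eq_extendByZero {N : ℕ} (x : Fin N → R) (m : ℕ) :
    ∑ j : Fin N, (if (j : ℕ) + 1 = m then x j else 0) = extendByZero x m := by
  rcases m with _ | m
  · simp [extendByZero]
  · simp only [extendByZero, Nat.add_right_cancel_iff]
    split_ifs with h
    · rw [Finset.sum_eq_single ⟨m, h⟩ (fun j _ hj => if_neg fun h' => hj (Fin.ext h')) (by simp),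
        if_pos rfl]
    · exact Finset.sum_eq_zero fun j _ => if_neg (by omega)

theorem extendByZero_succ {N : ℕ} (x : Fin N → R) (i : Fin N) :
    extendByZero x ((i : ℕ) + 1) = x i := by
  simp [extendByZero]

theorem extendByZero_restrict {N : ℕ} {X : ℕ → R} (h0 : X 0 = 0) (hX : ∀ m, N < m → X m = 0) :
    extendByZero (fun i : Fin N => X ((i : ℕ) + 1)) = X := by
  funext m
  rcases m with _ | m
  · exact h0.symm
  · simp only [extendByZero]
    split_ifs with h
    · rfl
    · exact (hX _ (by omega)).symm

theorem tridiagonal_mulVec_apply {N : ℕ} (a b c : ℕ → R) (x : Fin N → R) (i : Fin N) :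
    (tridiagonal N a b c *ᵥ x) i = tridiagonalApply a b c (extendByZero x) ((i : ℕ) + 1) := by
  have hentry : ∀ j, tridiagonal N a b c i j * x j =
      a ((i : ℕ) + 1) * (if (j : ℕ) + 1 = (i : ℕ) + 1 then x j else 0) +
        b ((i : ℕ) + 1) * (if (j : ℕ) + 1 = (i : ℕ) + 1 + 1 then x j else 0) +
        c ((i : ℕ) + 1) * (if (j : ℕ) + 1 = (i : ℕ) then x j else 0) := by
    intro j
    simp only [tridiagonal, of_apply]
    split_ifs <;> first | omega | ring
  simp only [mulVec, dotProduct, hentry, Finset.sum_add_distrib, ← Finset.mul_sum,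
    sum_ite_eq_extendByZero, tridiagonalApply, Nat.add_sub_cancel]
  ring

theorem mul_tridiagonalApply {a b c f : ℕ → R} {k : ℕ}
    (hk : f k * (a k - b k * f (k + 1) * c (k + 1)) = 1) (X : ℕ → R) :
    f k * tridiagonalApply a b c X k =
      lowerApply c f X k + f k * b k * lowerApply c f X (k + 1) := by
  simp only [tridiagonalApply, lowerApply, Nat.add_sub_cancel]
  linear_combination X k * hk

theorem eq_zero_of_tridiagonalApply_eq_zero {N : ℕ} {a b c f : ℕ → R}
    (hf : ∀ k, 1 ≤ k → k ≤ N → f k * (a k - b k * f (k + 1) * c (k + 1)) = 1)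
    (hfN : f (N + 1) = 0) {X : ℕ → R} (h0 : X 0 = 0) (hXN : X (N + 1) = 0)
    (hX : ∀ k, 1 ≤ k → k ≤ N → tridiagonalApply a b c X k = 0) :
    ∀ k ≤ N + 1, X k = 0 := by
  have hL : ∀ k, 1 ≤ k → k ≤ N + 1 → lowerApply c f X k = 0 := by
    intro k hk1 hk
    induction hk using Nat.decreasingInduction with
    | self => simp [lowerApply, hXN, hfN]
    | of_succ k hkN ih =>
      have h := mul_tridiagonalApply (hf k hk1 (by omega)) X
      rw [hX k hk1 (by omega), ih (by omega)] at h
      linear_combination -h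
  intro k hk
  induction k with
  | zero => exact h0
  | succ k ih =>
    have h := hL (k + 1) (by omega) hk
    rw [lowerApply, Nat.add_sub_cancel, ih (by omega)] at h
    simpa using h

theorem lowerApply_greenColumn (c f : ℕ → R) (k : ℕ) :
    lowerApply c f (greenColumn c f) k = if k = 1 then f 1 else 0 := by
  rcases k with _ | _ | k <;> simp [lowerApply, greenColumn]

theorem greenColumn_succ (c f : ℕ → R) {k : ℕ} (hk : 1 ≤ k) :
    greenColumn c f (k + 1) = -(f (k + 1) * c (k + 1)) * greenColumn c f k := by
  obtain ⟨j, rfl⟩ := Nat.exists_eq_add_of_le' hk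
  rfl

theorem tridiagonalApply_greenColumn {a b c f : ℕ → R} {k : ℕ} (hk0 : 1 ≤ k)
    (hk : f k * (a k - b k * f (k + 1) * c (k + 1)) = 1) :
    tridiagonalApply a b c (greenColumn c f) k = if k = 1 then 1 else 0 := by
  have h := mul_tridiagonalApply hk (greenColumn c f)
  rw [lowerApply_greenColumn, lowerApply_greenColumn, if_neg (by omega : k + 1 ≠ 1), mul_zero,
    add_zero] at h
  set u := a k - b k * f (k + 1) * c (k + 1)
  set t := tridiagonalApply a b c (greenColumn c f) k
  split_ifs at h ⊢ with hk1
  · subst hk1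
    linear_combination u * h + (1 - t) * hk
  · linear_combination u * h - t * hk

theorem greenColumn_eq_zero_of_lt {N : ℕ} (hN : 0 < N) {c f : ℕ → R} (hfN : f (N + 1) = 0) :
    ∀ m, N < m → greenColumn c f m = 0 := by
  intro m hm
  induction m, hm using Nat.le_induction with
  | base => rw [greenColumn_succ c f hN, hfN, zero_mul, neg_zero, zero_mul]
  | succ m hm ih => rw [greenColumn_succ c f (by omega), ih, mul_zero]

theorem isUnit_tridiagonal {N : ℕ} {a b c f : ℕ → K}
    (hf : ∀ k, 1 ≤ k → k ≤ N → f k * (a k - b k * f (k + 1) * c (k + 1)) = 1)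
    (hfN : f (N + 1) = 0) :
    IsUnit (tridiagonal N a b c) := by
  rw [← mulVec_injective_iff_isUnit, ← coe_mulVecLin, injective_iff_map_eq_zero]
  intro x hx
  have hrows : ∀ k, 1 ≤ k → k ≤ N → tridiagonalApply a b c (extendByZero x) k = 0 := by
    intro k hk1 hkN
    obtain ⟨i, rfl⟩ : ∃ i : Fin N, k = (i : ℕ) + 1 := ⟨⟨k - 1, by omega⟩, (Nat.sub_add_cancel hk1).symm⟩
    rw [← tridiagonal_mulVec_apply, ← coe_mulVecLin, hx, Pi.zero_apply]
  have hX := eq_zero_of_tridiagonalApply_eq_zero hf hfN rfl (by simp [extendByZero]) hrows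
  funext i
  rw [← extendByZero_succ x i, Pi.zero_apply, hX _ (by omega)]

theorem inv_tridiagonal_apply_zero_zero {N : ℕ} (hN : 0 < N) {a b c f : ℕ → K}
    (hf : ∀ k, 1 ≤ k → k ≤ N → f k * (a k - b k * f (k + 1) * c (k + 1)) = 1)
    (hfN : f (N + 1) = 0) :
    (tridiagonal N a b c)⁻¹ ⟨0, hN⟩ ⟨0, hN⟩ = f 1 := by
  set M := tridiagonal N a b c
  set v : Fin N → K := fun i => greenColumn c f ((i : ℕ) + 1)
  have hv : M *ᵥ v = Pi.single ⟨0, hN⟩ 1 := by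
    funext i
    rw [tridiagonal_mulVec_apply, extendByZero_restrict rfl (greenColumn_eq_zero_of_lt hN hfN),
      tridiagonalApply_greenColumn (by omega) (hf _ (by omega) i.isLt), Pi.single_apply]
    simp [Fin.ext_iff]
  have hM : IsUnit M.det := (isUnit_iff_isUnit_det M).1 (isUnit_tridiagonal hf hfN)
  calc M⁻¹ ⟨0, hN⟩ ⟨0, hN⟩ = (M⁻¹ *ᵥ (M *ᵥ v)) ⟨0, hN⟩ := by rw [hv, mulVec_single_one]; rfl
    _ = f 1 := by rw [mulVec_mulVec, nonsing_inv_mul M hM, one_mulVec]; rfl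

theorem stmt4_general (N : ℕ) (hN : 0 < N) (a b c : ℕ → ℂ) (E : ℂ) (f : ℕ → ℂ)
    (hfN : f (N + 1) = 0)
    (hrec : ∀ k, 1 ≤ k → k ≤ N → f k * (a k - E - b k * f (k + 1) * c (k + 1)) = 1)
    (H : Matrix (Fin N) (Fin N) ℂ)
    (hH : ∀ i j : Fin N, H i j =
      if (i : ℕ) = (j : ℕ) then a ((i : ℕ) + 1)
      else if (i : ℕ) + 1 = (j : ℕ) then b ((i : ℕ) + 1)
      else if (j : ℕ) + 1 = (i : ℕ) then c ((i : ℕ) + 1) else 0) :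
    IsUnit (H - E • (1 : Matrix (Fin N) (Fin N) ℂ)) ∧
      (H - E • (1 : Matrix (Fin N) (Fin N) ℂ))⁻¹ ⟨0, hN⟩ ⟨0, hN⟩ = f 1 := by
  have hH' : H = tridiagonal N a b c := Matrix.ext hH
  rw [hH', tridiagonal_sub_smul_one]
  exact ⟨isUnit_tridiagonal hrec hfN, inv_tridiagonal_apply_zero_zero hN hrec hfN⟩

/-- Green's-function identity: the (1,1) entry of the resolvent of a complex
tridiagonal matrix equals the continued fraction `f 1`
(1-based indexing of the entry data). -/
theorem stmt4 (N : ℕ) (hN : 0 < N) (a b c : ℕ → ℂ) (E : ℂ) (f : ℕ → ℂ)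
    (hbN : b N = 0) (hcN : c (N + 1) = 0)
    (hfN : f (N + 1) = 0)
    (hrec : ∀ k, 1 ≤ k → k ≤ N → f k * (a k - E - b k * f (k + 1) * c (k + 1)) = 1)
    (H : Matrix (Fin N) (Fin N) ℂ)
    (hH : ∀ i j : Fin N, H i j =
      if (i : ℕ) = (j : ℕ) then a ((i : ℕ) + 1)
      else if (i : ℕ) + 1 = (j : ℕ) then b ((i : ℕ) + 1)
      else if (j : ℕ) + 1 = (i : ℕ) then c ((i : ℕ) + 1) else 0) :
    IsUnit (H - E • (1 : Matrix (Fin N) (Fin N) ℂ)) ∧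
      (H - E • (1 : Matrix (Fin N) (Fin N) ℂ))⁻¹ ⟨0, hN⟩ ⟨0, hN⟩ = f 1 :=
  stmt4_general N hN a b c E f hfN hrec H hH
end

section
/- Let α, β, γ, σ be real numbers, let A = [[0, β + iγ],[β − iγ, 0]] and B = [[0, α],[α, 0]] be 2×2 complex matrices, and let u, x, y be real numbers with D := u² − x² − y² ≠ 0. Let M = [[u, x + iy],[x − iy, u]]. Then M is invertible, and the matrix-continued-fraction step G := A − σ·I − B·M^{−1}·B equals [[u', x' + iy'],[x' − iy', u']] with real entries u' = −σ − α²·u/D, x' = β + α²·x/D, y' = γ − α²·y/D. In particular, the class of 2×2 Hermitian matrices with equal real diagonal entries is invariant under the matrix-continued-fraction recurrence F_k^{−1} = A − σ·I − B·F_{k+1}·B. -/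
open Complex Matrix

/-!
The matrices `[[u, x + iy], [x - iy, u]]` form a real vector space that is closed under inversion
(the inverse is the adjugate over the determinant `u² - x² - y²`, which negates `x` and `y`) and
under conjugation by `[[0, α], [α, 0]]` (which scales by `α²` and swaps the off-diagonal entries,
negating `y`); so each term of the recurrence stays in the class, with the stated coordinates.
-/

/-- The Hermitian 2×2 matrices with equal real diagonal entries. -/
def eqDiagHerm (u x y : ℝ) : Matrix (Fin 2) (Fin 2) ℂ :=
  !![(u : ℂ), x + I * y; x - I * y, u]

namespace eqDiagHerm

lemma sub (u x y u' x' y' : ℝ) :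
    eqDiagHerm u x y - eqDiagHerm u' x' y' = eqDiagHerm (u - u') (x - x') (y - y') := by
  ext i j; fin_cases i <;> fin_cases j <;> simp [eqDiagHerm] <;> ring

lemma det (u x y : ℝ) : (eqDiagHerm u x y).det = ((u ^ 2 - x ^ 2 - y ^ 2 : ℝ) : ℂ) := by
  rw [eqDiagHerm, det_fin_two_of]; push_cast; ring_nf; rw [I_sq]; ring

lemma inv {u x y : ℝ} (hD : u ^ 2 - x ^ 2 - y ^ 2 ≠ 0) :
    (eqDiagHerm u x y)⁻¹ =
      eqDiagHerm (u / (u ^ 2 - x ^ 2 - y ^ 2)) (-x / (u ^ 2 - x ^ 2 - y ^ 2))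
        (-y / (u ^ 2 - x ^ 2 - y ^ 2)) := by
  have hDC : ((u ^ 2 - x ^ 2 - y ^ 2 : ℝ) : ℂ) ≠ 0 := by exact_mod_cast hD
  rw [Matrix.inv_def, det, eqDiagHerm, adjugate_fin_two_of, Ring.inverse_eq_inv', eqDiagHerm]
  ext i j; fin_cases i <;> fin_cases j <;> simp <;> field_simp <;> ring

lemma offDiag_mul_mul_offDiag (α u x y : ℝ) :
    !![0, (α : ℂ); α, 0] * eqDiagHerm u x y * !![0, (α : ℂ); α, 0] =
      eqDiagHerm (α ^ 2 * u) (α ^ 2 * x) (-(α ^ 2 * y)) := by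
  ext i j; fin_cases i <;> fin_cases j <;> simp [eqDiagHerm, mul_apply, Fin.sum_univ_two] <;> ring

end eqDiagHerm

/-- One step of the 2×2 matrix-continued-fraction recurrence:
for `A = [[0, β+iγ],[β-iγ, 0]]`, `B = [[0, α],[α, 0]]` and
`M = [[u, x+iy],[x-iy, u]]` with `D = u² - x² - y² ≠ 0`, the matrix `M` is
invertible and `A - σ·I - B·M⁻¹·B = [[u', x'+iy'],[x'-iy', u']]` with
`u' = -σ - α²u/D`, `x' = β + α²x/D`, `y' = γ - α²y/D`.  In particular the
class of 2×2 Hermitian matrices with equal real diagonal entries is invariant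
under the recurrence. -/
theorem stmt12 (α β γ σ u x y : ℝ) (hD : u ^ 2 - x ^ 2 - y ^ 2 ≠ 0)
    (A B M : Matrix (Fin 2) (Fin 2) ℂ)
    (hA : A = !![0, (β : ℂ) + Complex.I * (γ : ℂ); (β : ℂ) - Complex.I * (γ : ℂ), 0])
    (hB : B = !![0, (α : ℂ); (α : ℂ), 0])
    (hM : M = !![(u : ℂ), (x : ℂ) + Complex.I * (y : ℂ);
                 (x : ℂ) - Complex.I * (y : ℂ), (u : ℂ)])
    (u' x' y' : ℝ)
    (hu' : u' = -σ - α ^ 2 * u / (u ^ 2 - x ^ 2 - y ^ 2))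
    (hx' : x' = β + α ^ 2 * x / (u ^ 2 - x ^ 2 - y ^ 2))
    (hy' : y' = γ - α ^ 2 * y / (u ^ 2 - x ^ 2 - y ^ 2)) :
    IsUnit M ∧
      A - (σ : ℂ) • (1 : Matrix (Fin 2) (Fin 2) ℂ) - B * M⁻¹ * B =
        !![(u' : ℂ), (x' : ℂ) + Complex.I * (y' : ℂ);
           (x' : ℂ) - Complex.I * (y' : ℂ), (u' : ℂ)] := by
  change M = eqDiagHerm u x y at hM
  change IsUnit M ∧ _ = eqDiagHerm u' x' y'
  have hshift : A - (σ : ℂ) • (1 : Matrix (Fin 2) (Fin 2) ℂ) = eqDiagHerm (-σ) β γ := by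
    rw [hA]; ext i j; fin_cases i <;> fin_cases j <;> simp [eqDiagHerm]
  refine ⟨?_, ?_⟩
  · rw [isUnit_iff_isUnit_det, hM, eqDiagHerm.det]
    exact (ofReal_ne_zero.mpr hD).isUnit
  · rw [hshift, hB, hM, eqDiagHerm.inv hD, eqDiagHerm.offDiag_mul_mul_offDiag, eqDiagHerm.sub, hu', hx', hy']
    congr 1 <;> ring
end

section
/- Let σ, β, γ be fixed real parameters and consider the real triplet map T(u, x, y) = (u', x', y') with u' = −σ − u/D, x' = β + x/D, y' = γ − y/D, where D = u² − x² − y² (this is the MCF iteration with α = 1). If (u, x, y) ∈ ℝ³ satisfies D ≠ 0 and γ·u = −σ·y, then the image also satisfies γ·u' = −σ·y'. In particular, since the initial point (u, x, y) = (−σ, β, γ) satisfies γ·u = −σ·y, this relation holds along all iterates of T (as long as they remain defined). -/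
lemma triplet_defect_map (σ γ u y D : ℝ) :
    γ * (-σ - u / D) + σ * (γ - y / D) = -(γ * u + σ * y) / D := by
  ring

theorem stmt13_general (σ γ u x y : ℝ)
    (h : γ * u = -(σ * y)) :
    γ * (-σ - u / (u ^ 2 - x ^ 2 - y ^ 2)) =
        -(σ * (γ - y / (u ^ 2 - x ^ 2 - y ^ 2))) ∧
      γ * (-σ) = -(σ * γ) := by
  have hdefect : γ * u + σ * y = 0 := by rw [h, neg_add_cancel]
  refine ⟨eq_neg_of_add_eq_zero_left ?_, by ring⟩
  rw [triplet_defect_map, hdefect, neg_zero, zero_div]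

/-- The relation `γ·u = -σ·y` is invariant under the MCF triplet map
`T(u,x,y) = (-σ - u/D, β + x/D, γ - y/D)`, `D = u² - x² - y²` (α = 1);
in particular it holds at the initial point `(u,x,y) = (-σ, β, γ)`. -/
theorem stmt13 (σ β γ u x y : ℝ) (hD : u ^ 2 - x ^ 2 - y ^ 2 ≠ 0)
    (h : γ * u = -(σ * y)) :
    γ * (-σ - u / (u ^ 2 - x ^ 2 - y ^ 2)) =
        -(σ * (γ - y / (u ^ 2 - x ^ 2 - y ^ 2))) ∧
      γ * (-σ) = -(σ * γ) :=
  stmt13_general σ γ u x y h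
end

section
/- Let σ, β, γ ∈ ℝ with σ ≠ 0, and let (u, x, y) ∈ ℝ³ with D := u² − x² − y² ≠ 0 be a fixed point of the MCF triplet map with α = 1, i.e., u = −σ − u/D, x = β + x/D, y = γ − y/D. Then u is a real root of the quartic polynomial P(u) = −4u⁴σ² + 4u⁴γ² − 8σ³u³ + 8σu³γ² + σ²u²β² − 5σ⁴u² + 5u²γ²σ² − 4σ²u² + σ³uβ² − 4uσ³ − σ⁵u + uγ²σ³ − σ⁴, i.e., P(u) = 0. -/
/-!
Clearing the denominator `D`, the fixed-point equations read `D (u + σ) = -u`,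
`D (x - β) = x` and `D (y - γ) = -y`. Eliminating `D` between them pairwise gives the
linear relations `σ y = -γ u` and `(2u + σ) x = β u`. Substituting these into
`D = u² - x² - y²` inside `D (u + σ) = -u`, after multiplying by `σ² (2u + σ)²`, leaves `u · P(u) = 0`;
and `u ≠ 0`, since `u = 0` would force `D σ = 0`.
-/

namespace MCFTriplet

variable {K : Type*} [Field K] {σ β γ u x y D : K}

theorem mul_add_eq_neg_of_eq_neg_sub_div (hD : D ≠ 0) (h : u = -σ - u / D) :
    D * (u + σ) = -u := by
  field_simp at h
  linear_combination h

theorem mul_sub_eq_of_eq_add_div (hD : D ≠ 0) (h : x = β + x / D) : D * (x - β) = x := by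
  field_simp at h
  linear_combination h

theorem mul_sub_eq_neg_of_eq_sub_div (hD : D ≠ 0) (h : y = γ - y / D) :
    D * (y - γ) = -y := by
  field_simp at h
  linear_combination h

theorem ne_zero_of_mul_add_eq_neg (hσ : σ ≠ 0) (hD : D ≠ 0) (hu : D * (u + σ) = -u) :
    u ≠ 0 := by
  rintro rfl
  exact mul_ne_zero hD hσ (by simpa using hu)

theorem mul_eq_neg_mul_of_fixed (hD : D ≠ 0) (hu : D * (u + σ) = -u) (hy : D * (y - γ) = -y) :
    σ * y = -(γ * u) := by
  have h : D * (σ * y + γ * u) = 0 := by linear_combination y * hu - u * hy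
  linear_combination (mul_eq_zero.mp h).resolve_left hD

theorem mul_two_mul_add_eq_of_fixed (hu : D * (u + σ) = -u) (hx : D * (x - β) = x) :
    x * (2 * u + σ) = β * u := by
  linear_combination (-(u + σ)) * hx + (x - β) * hu

/-- The quartic `P` of the statement. -/
def quartic (σ β γ u : K) : K :=
  -4 * u ^ 4 * σ ^ 2 + 4 * u ^ 4 * γ ^ 2 - 8 * σ ^ 3 * u ^ 3
    + 8 * σ * u ^ 3 * γ ^ 2 + σ ^ 2 * u ^ 2 * β ^ 2 - 5 * σ ^ 4 * u ^ 2
    + 5 * u ^ 2 * γ ^ 2 * σ ^ 2 - 4 * σ ^ 2 * u ^ 2 + σ ^ 3 * u * β ^ 2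
    - 4 * u * σ ^ 3 - σ ^ 5 * u + u * γ ^ 2 * σ ^ 3 - σ ^ 4

theorem quartic_eq_zero_of_fixed (hσ : σ ≠ 0) (hD : u ^ 2 - x ^ 2 - y ^ 2 ≠ 0)
    (hu : (u ^ 2 - x ^ 2 - y ^ 2) * (u + σ) = -u)
    (hx : (u ^ 2 - x ^ 2 - y ^ 2) * (x - β) = x)
    (hy : (u ^ 2 - x ^ 2 - y ^ 2) * (y - γ) = -y) :
    quartic σ β γ u = 0 := by
  have hy' := mul_eq_neg_mul_of_fixed hD hu hy
  have hx' := mul_two_mul_add_eq_of_fixed hu hx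
  have key : u * quartic σ β γ u = 0 := by
    unfold quartic
    linear_combination (-(σ ^ 2) * (2 * u + σ) ^ 2) * hu
      + (-(σ ^ 2) * (u + σ) * (x * (2 * u + σ) + β * u)) * hx'
      + (-((u + σ) * (2 * u + σ) ^ 2) * (σ * y - γ * u)) * hy'
  exact (mul_eq_zero.mp key).resolve_left (ne_zero_of_mul_add_eq_neg hσ hD hu)

end MCFTriplet

/-- Any real fixed point `(u,x,y)` of the MCF triplet map with `α = 1`
(and `σ ≠ 0`) has its first component a root of the quartic polynomial `P`. -/
theorem stmt14 (σ β γ : ℝ) (hσ : σ ≠ 0) (u x y : ℝ)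
    (hD : u ^ 2 - x ^ 2 - y ^ 2 ≠ 0)
    (hu : u = -σ - u / (u ^ 2 - x ^ 2 - y ^ 2))
    (hx : x = β + x / (u ^ 2 - x ^ 2 - y ^ 2))
    (hy : y = γ - y / (u ^ 2 - x ^ 2 - y ^ 2)) :
    -4 * u ^ 4 * σ ^ 2 + 4 * u ^ 4 * γ ^ 2 - 8 * σ ^ 3 * u ^ 3
        + 8 * σ * u ^ 3 * γ ^ 2 + σ ^ 2 * u ^ 2 * β ^ 2 - 5 * σ ^ 4 * u ^ 2
        + 5 * u ^ 2 * γ ^ 2 * σ ^ 2 - 4 * σ ^ 2 * u ^ 2 + σ ^ 3 * u * β ^ 2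
        - 4 * u * σ ^ 3 - σ ^ 5 * u + u * γ ^ 2 * σ ^ 3 - σ ^ 4 = 0 :=
  MCFTriplet.quartic_eq_zero_of_fixed hσ hD
    (MCFTriplet.mul_add_eq_neg_of_eq_neg_sub_div hD hu)
    (MCFTriplet.mul_sub_eq_of_eq_add_div hD hx)
    (MCFTriplet.mul_sub_eq_neg_of_eq_sub_div hD hy)
end

section
/- Let σ, β, γ ∈ ℝ with σ ≠ 0, and let (u, x, y) ∈ ℝ³ with D := u² − x² − y² ≠ 0 be a fixed point of the MCF triplet map with α = 1, i.e., u = −σ − u/D, x = β + x/D, y = γ − y/D. Then u and x satisfy the relation βσ³x − 4u³σ² + 4u³γ² − 6σ³u² + 6u²γ²σ − 4uσ² + σ²uβ² − 2uσ⁴ + 2uσ²γ² − 2σ³ = 0, which is linear in x and hence (when β ≠ 0) determines x uniquely from u. -/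
/-!
Clearing denominators, a fixed point satisfies `(u + σ) D = -u`, `(x - β) D = x` and
`(y - γ) D = -y`. Eliminating `D` between them gives the linear relations
`(2u + σ) x = β u` and `σ y + γ u = 0`; substituting these into `D = u² - x² - y²` shows
that `u` is a root of `P := fixedPointPoly σ β γ` (when `u = 0`, because then `σ D = 0`
forces `σ = 0`). The stated relation `R(u, x)`
satisfies `(2u + σ) R = β σ³ ((2u + σ) x - β u) - 2 P(u)`, so it vanishes whenever
`2u + σ ≠ 0`; when `2u + σ = 0` the first linear relation forces `β u = 0`, which again
makes `R` vanish.
-/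

namespace MCFTriplet

theorem sub_mul_eq_of_eq_add_div {K : Type*} [Field K] {a c e D : K} (hD : D ≠ 0)
    (h : a = c + e / D) : (a - c) * D = e := by
  rw [h, add_sub_cancel_left, div_mul_cancel₀ _ hD]

theorem fixedPoint_cleared {σ β γ u x y : ℝ} (hD : u ^ 2 - x ^ 2 - y ^ 2 ≠ 0)
    (hu : u = -σ - u / (u ^ 2 - x ^ 2 - y ^ 2))
    (hx : x = β + x / (u ^ 2 - x ^ 2 - y ^ 2))
    (hy : y = γ - y / (u ^ 2 - x ^ 2 - y ^ 2)) :
    (u + σ) * (u ^ 2 - x ^ 2 - y ^ 2) = -u ∧ (x - β) * (u ^ 2 - x ^ 2 - y ^ 2) = x ∧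
      (y - γ) * (u ^ 2 - x ^ 2 - y ^ 2) = -y := by
  refine ⟨?_, sub_mul_eq_of_eq_add_div hD hx, ?_⟩
  · have := sub_mul_eq_of_eq_add_div (c := -σ) (e := -u) hD (hu.trans (by ring))
    linear_combination this
  · exact sub_mul_eq_of_eq_add_div hD (hy.trans (by ring))

def fixedPointPoly (σ β γ u : ℝ) : ℝ :=
  (u + σ) * u * ((2 * u + σ) ^ 2 * (σ ^ 2 - γ ^ 2) - β ^ 2 * σ ^ 2) + (2 * u + σ) ^ 2 * σ ^ 2

section Cleared

variable {σ β γ u x y : ℝ}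
  (h1 : (u + σ) * (u ^ 2 - x ^ 2 - y ^ 2) = -u)
  (h2 : (x - β) * (u ^ 2 - x ^ 2 - y ^ 2) = x)
  (h3 : (y - γ) * (u ^ 2 - x ^ 2 - y ^ 2) = -y)

include h1 h2 in
theorem two_mul_add_mul_x_eq : (2 * u + σ) * x = β * u := by
  linear_combination (x - β) * h1 - (u + σ) * h2

include h1 h3 in
theorem mul_y_add_mul_u_eq_zero : σ * y + γ * u = 0 := by
  linear_combination (γ - y) * h1 + (u + σ) * h3

include h1 h2 h3 in
theorem fixedPointPoly_eq_zero (hD : u ^ 2 - x ^ 2 - y ^ 2 ≠ 0) :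
    fixedPointPoly σ β γ u = 0 := by
  have hA := two_mul_add_mul_x_eq h1 h2
  have hB := mul_y_add_mul_u_eq_zero h1 h3
  rcases eq_or_ne u 0 with rfl | hu
  · have hσ : σ = 0 := by
      refine (mul_eq_zero.mp ?_).resolve_right hD
      linear_combination h1
    simp [fixedPointPoly, hσ]
  · refine (mul_eq_zero.mp ?_).resolve_left hu
    unfold fixedPointPoly
    linear_combination (2 * u + σ) ^ 2 * σ ^ 2 * h1
      + (u + σ) * σ ^ 2 * ((2 * u + σ) * x + β * u) * hA
      + (u + σ) * (2 * u + σ) ^ 2 * (σ * y - γ * u) * hB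

end Cleared

end MCFTriplet

open MCFTriplet in
theorem stmt15_general (σ β γ : ℝ) (u x y : ℝ)
    (hD : u ^ 2 - x ^ 2 - y ^ 2 ≠ 0)
    (hu : u = -σ - u / (u ^ 2 - x ^ 2 - y ^ 2))
    (hx : x = β + x / (u ^ 2 - x ^ 2 - y ^ 2))
    (hy : y = γ - y / (u ^ 2 - x ^ 2 - y ^ 2)) :
    β * σ ^ 3 * x - 4 * u ^ 3 * σ ^ 2 + 4 * u ^ 3 * γ ^ 2 - 6 * σ ^ 3 * u ^ 2
        + 6 * u ^ 2 * γ ^ 2 * σ - 4 * u * σ ^ 2 + σ ^ 2 * u * β ^ 2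
        - 2 * u * σ ^ 4 + 2 * u * σ ^ 2 * γ ^ 2 - 2 * σ ^ 3 = 0 := by
  obtain ⟨h1, h2, h3⟩ := fixedPoint_cleared hD hu hx hy
  have hA := two_mul_add_mul_x_eq h1 h2
  have hP := fixedPointPoly_eq_zero h1 h2 h3 hD
  rcases eq_or_ne (2 * u + σ) 0 with ht | ht
  · have hβu : β * u = 0 := by rw [← hA, ht, zero_mul]
    obtain rfl : σ = -2 * u := by linear_combination ht
    linear_combination (4 * u ^ 2 * β - 8 * u ^ 2 * x) * hβu
  · refine mul_left_cancel₀ ht ?_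
    unfold fixedPointPoly at hP
    linear_combination β * σ ^ 3 * hA - 2 * hP

/-- At any real fixed point `(u,x,y)` of the MCF triplet map with `α = 1`
(and `σ ≠ 0`), the components `u` and `x` satisfy a relation that is linear
in `x` (and hence, when `β ≠ 0`, determines `x` uniquely from `u`). -/
theorem stmt15 (σ β γ : ℝ) (hσ : σ ≠ 0) (u x y : ℝ)
    (hD : u ^ 2 - x ^ 2 - y ^ 2 ≠ 0)
    (hu : u = -σ - u / (u ^ 2 - x ^ 2 - y ^ 2))
    (hx : x = β + x / (u ^ 2 - x ^ 2 - y ^ 2))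
    (hy : y = γ - y / (u ^ 2 - x ^ 2 - y ^ 2)) :
    β * σ ^ 3 * x - 4 * u ^ 3 * σ ^ 2 + 4 * u ^ 3 * γ ^ 2 - 6 * σ ^ 3 * u ^ 2
        + 6 * u ^ 2 * γ ^ 2 * σ - 4 * u * σ ^ 2 + σ ^ 2 * u * β ^ 2
        - 2 * u * σ ^ 4 + 2 * u * σ ^ 2 * γ ^ 2 - 2 * σ ^ 3 = 0 :=
  stmt15_general σ β γ u x y hD hu hx hy
end

section
/- For the parameter choice σ = 1, γ = 1/2, β = 2 and α = 1, the MCF triplet map T(u, x, y) = (−σ − u/D, β + x/D, γ − y/D), with D = u² − x² − y², has no real fixed point: there is no (u, x, y) ∈ ℝ³ with D ≠ 0 satisfying u = −1 − u/D, x = 2 + x/D, y = 1/2 − y/D. -/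
/-!
Clearing denominators, a fixed point with `D ≠ 0` has `u (D + 1) = -D`, `x (D - 1) = 2D` and
`y (D + 1) = D / 2`. Multiplying `D = u² - x² - y²` by `(D + 1)² (D - 1)²` and substituting the
squares of these relations leaves `D · q(D) = 0` with `q(D) = 4D⁴ + 13D³ + 30D² + 13D + 4`.
But `q(D) = 4 (D² + 13D/8 + 1)² + 183D²/16`, and the inner quadratic has negative
discriminant, so `q` has no real root.
-/

lemma mul_add_one_eq_of_eq_sub_div {a c d : ℝ} (hd : d ≠ 0) (h : a = c - a / d) :
    a * (d + 1) = c * d := by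
  field_simp at h
  linarith

lemma mul_sub_one_eq_of_eq_add_div {a c d : ℝ} (hd : d ≠ 0) (h : a = c + a / d) :
    a * (d - 1) = c * d := by
  field_simp at h
  linarith

lemma mcfQuartic_pos (d : ℝ) : 0 < 4 * d ^ 4 + 13 * d ^ 3 + 30 * d ^ 2 + 13 * d + 4 := by
  have hs : 0 < d ^ 2 + 13 / 8 * d + 1 := by nlinarith [sq_nonneg (d + 13 / 16)]
  calc 0 < 4 * (d ^ 2 + 13 / 8 * d + 1) ^ 2 + 183 / 16 * d ^ 2 := by positivity
    _ = 4 * d ^ 4 + 13 * d ^ 3 + 30 * d ^ 2 + 13 * d + 4 := by ring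

lemma mul_mcfQuartic_eq_zero {u x y d : ℝ} (hd : d = u ^ 2 - x ^ 2 - y ^ 2)
    (hu : u * (d + 1) = -1 * d) (hx : x * (d - 1) = 2 * d) (hy : y * (d + 1) = 1 / 2 * d) :
    d * (4 * d ^ 4 + 13 * d ^ 3 + 30 * d ^ 2 + 13 * d + 4) = 0 := by
  linear_combination 4 * (d + 1) ^ 2 * (d - 1) ^ 2 * hd
    + 4 * (d - 1) ^ 2 * (u * (d + 1) - d) * hu
    - 4 * (d + 1) ^ 2 * (x * (d - 1) + 2 * d) * hx
    - 4 * (d - 1) ^ 2 * (y * (d + 1) + 1 / 2 * d) * hy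

/-- For `σ = 1`, `γ = 1/2`, `β = 2` (and `α = 1`) the MCF triplet map
`T(u,x,y) = (-σ - u/D, β + x/D, γ - y/D)`, `D = u² - x² - y²`, has no real
fixed point. -/
theorem stmt18 :
    ¬ ∃ u x y : ℝ, u ^ 2 - x ^ 2 - y ^ 2 ≠ 0 ∧
      u = -1 - u / (u ^ 2 - x ^ 2 - y ^ 2) ∧
      x = 2 + x / (u ^ 2 - x ^ 2 - y ^ 2) ∧
      y = 1 / 2 - y / (u ^ 2 - x ^ 2 - y ^ 2) := by
  rintro ⟨u, x, y, hd, hu, hx, hy⟩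
  have key := mul_mcfQuartic_eq_zero rfl (mul_add_one_eq_of_eq_sub_div hd hu)
    (mul_sub_one_eq_of_eq_add_div hd hx) (mul_add_one_eq_of_eq_sub_div hd hy)
  exact mul_ne_zero hd (mcfQuartic_pos _).ne' key
end
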